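/- For every nonzero row vector ω ∈ ℝ² and every invertible real 2×2 matrix A, one has v_{ω,A} · v_{ωA,A⁻¹} = 1 and v_{ω,A} · u_{ωA,A⁻¹} = −u_{ω,A}. -/
import Mathlib


open Matrix

noncomputable section

/-- `u_{ω,A}` for a row vector `ω = (ω 0, ω 1)` and a matrix
`A = [[a, b], [c, d]] = [[A 0 0, A 0 1], [A 1 0, A 1 1]]`. -/
def uu (ω : Fin 2 → ℝ) (A : Matrix (Fin 2) (Fin 2) ℝ) : ℝ :=
  ((A 0 0 * A 1 0 + A 0 1 * A 1 1) * (ω 0 ^ 2 - ω 1 ^ 2)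
      - (A 0 0 ^ 2 + A 0 1 ^ 2 - A 1 0 ^ 2 - A 1 1 ^ 2) * (ω 0 * ω 1))
    / ((A 0 0 * ω 0 + A 1 0 * ω 1) ^ 2 + (A 0 1 * ω 0 + A 1 1 * ω 1) ^ 2)

/-- `v_{ω,A}`. -/
def vv (ω : Fin 2 → ℝ) (A : Matrix (Fin 2) (Fin 2) ℝ) : ℝ :=
  ((A 0 0 * A 1 1 - A 0 1 * A 1 0) * (ω 0 ^ 2 + ω 1 ^ 2))
    / ((A 0 0 * ω 0 + A 1 0 * ω 1) ^ 2 + (A 0 1 * ω 0 + A 1 1 * ω 1) ^ 2)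

lemma uu_smul (ω : Fin 2 → ℝ) (s : ℝ) (hs : s ≠ 0) (B : Matrix (Fin 2) (Fin 2) ℝ) :
    uu ω (s • B) = uu ω B := by
  have h2 : s ^ 2 ≠ 0 := pow_ne_zero 2 hs
  calc uu ω (s • B)
      = (s ^ 2 * ((B 0 0 * B 1 0 + B 0 1 * B 1 1) * (ω 0 ^ 2 - ω 1 ^ 2)
          - (B 0 0 ^ 2 + B 0 1 ^ 2 - B 1 0 ^ 2 - B 1 1 ^ 2) * (ω 0 * ω 1)))
        / (s ^ 2 * ((B 0 0 * ω 0 + B 1 0 * ω 1) ^ 2 + (B 0 1 * ω 0 + B 1 1 * ω 1) ^ 2)) := by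
        simp only [uu, Matrix.smul_apply, smul_eq_mul]; congr 1 <;> ring
    _ = uu ω B := by rw [mul_div_mul_left _ _ h2]; rfl

lemma vv_smul (ω : Fin 2 → ℝ) (s : ℝ) (hs : s ≠ 0) (B : Matrix (Fin 2) (Fin 2) ℝ) :
    vv ω (s • B) = vv ω B := by
  have h2 : s ^ 2 ≠ 0 := pow_ne_zero 2 hs
  calc vv ω (s • B)
      = (s ^ 2 * ((B 0 0 * B 1 1 - B 0 1 * B 1 0) * (ω 0 ^ 2 + ω 1 ^ 2)))
        / (s ^ 2 * ((B 0 0 * ω 0 + B 1 0 * ω 1) ^ 2 + (B 0 1 * ω 0 + B 1 1 * ω 1) ^ 2)) := by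
        simp only [vv, Matrix.smul_apply, smul_eq_mul]; congr 1 <;> ring
    _ = vv ω B := by rw [mul_div_mul_left _ _ h2]; rfl

/-- `v_{ω,A} · v_{ωA,A⁻¹} = 1` and `v_{ω,A} · u_{ωA,A⁻¹} = −u_{ω,A}`. -/
theorem uv_inverse (ω : Fin 2 → ℝ) (hω : ω ≠ 0)
    (A : Matrix (Fin 2) (Fin 2) ℝ) (hA : A.det ≠ 0) :
    vv ω A * vv (vecMul ω A) A⁻¹ = 1 ∧
    vv ω A * uu (vecMul ω A) A⁻¹ = - uu ω A := by
  have hΔ : A 0 0 * A 1 1 - A 0 1 * A 1 0 ≠ 0 := by rwa [Matrix.det_fin_two] at hA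
  have hadj : A⁻¹ = (A.det)⁻¹ • !![A 1 1, -A 0 1; -A 1 0, A 0 0] := by
    rw [Matrix.inv_def, Matrix.adjugate_fin_two, Ring.inverse_eq_inv']
  rw [hadj, uu_smul _ _ (inv_ne_zero hA), vv_smul _ _ (inv_ne_zero hA)]
  simp only [uu, vv, Matrix.vecMul, dotProduct, Fin.sum_univ_two,
    Matrix.cons_val', Matrix.cons_val_zero, Matrix.cons_val_one, Matrix.head_cons,
    Matrix.empty_val', Matrix.cons_val_fin_one, Matrix.head_fin_const, Matrix.of_apply]
  have hn : ω 0 ^ 2 + ω 1 ^ 2 ≠ 0 := by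
    intro h
    apply hω
    have h0 : ω 0 = 0 := by nlinarith [sq_nonneg (ω 0), sq_nonneg (ω 1)]
    have h1 : ω 1 = 0 := by nlinarith [sq_nonneg (ω 0), sq_nonneg (ω 1)]
    funext i; fin_cases i <;> assumption
  have hN : (A 0 0 * ω 0 + A 1 0 * ω 1) ^ 2 + (A 0 1 * ω 0 + A 1 1 * ω 1) ^ 2 ≠ 0 := by
    intro h
    have h0 : A 0 0 * ω 0 + A 1 0 * ω 1 = 0 := by
      nlinarith [sq_nonneg (A 0 0 * ω 0 + A 1 0 * ω 1), sq_nonneg (A 0 1 * ω 0 + A 1 1 * ω 1)]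
    have h1 : A 0 1 * ω 0 + A 1 1 * ω 1 = 0 := by
      nlinarith [sq_nonneg (A 0 0 * ω 0 + A 1 0 * ω 1), sq_nonneg (A 0 1 * ω 0 + A 1 1 * ω 1)]
    have e0 : (A 0 0 * A 1 1 - A 0 1 * A 1 0) * ω 0 = 0 := by
      linear_combination A 1 1 * h0 - A 1 0 * h1
    have e1 : (A 0 0 * A 1 1 - A 0 1 * A 1 0) * ω 1 = 0 := by
      linear_combination A 0 0 * h1 - A 0 1 * h0
    apply hω
    funext i; fin_cases i
    · exact (mul_eq_zero.mp e0).resolve_left hΔ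
    · exact (mul_eq_zero.mp e1).resolve_left hΔ
  have hDeq : (A 1 1 * (ω 0 * A 0 0 + ω 1 * A 1 0) + -A 1 0 * (ω 0 * A 0 1 + ω 1 * A 1 1)) ^ 2 +
      (-A 0 1 * (ω 0 * A 0 0 + ω 1 * A 1 0) + A 0 0 * (ω 0 * A 0 1 + ω 1 * A 1 1)) ^ 2 =
      (A 0 0 * A 1 1 - A 0 1 * A 1 0) ^ 2 * (ω 0 ^ 2 + ω 1 ^ 2) := by ring
  have hD : (A 1 1 * (ω 0 * A 0 0 + ω 1 * A 1 0) + -A 1 0 * (ω 0 * A 0 1 + ω 1 * A 1 1)) ^ 2 +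
      (-A 0 1 * (ω 0 * A 0 0 + ω 1 * A 1 0) + A 0 0 * (ω 0 * A 0 1 + ω 1 * A 1 1)) ^ 2 ≠ 0 := by
    rw [hDeq]; exact mul_ne_zero (pow_ne_zero 2 hΔ) hn
  rw [hDeq]
  constructor
  · field_simp
  · field_simp
    ring
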